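/- arXiv:2202.00261 — 2 statements merged into one kernel-verified Lean document; each statement's English description precedes it below -/
import Mathlib

section
/- Let G be a group acting linearly on vector spaces V₁ and V₂. Define the clips operation on conjugacy classes of subgroups by [H₁] ⊚ [H₂] := {[H₁ ∩ gH₂g⁻¹] : g ∈ G}. Then the set of isotropy classes of the diagonal representation on V₁ ⊕ V₂ equals the union over isotropy classes [H₁] of V₁ and [H₂] of V₂ of [H₁] ⊚ [H₂]. -/
section ClipsGeneral

variable {G : Type*} [Group G]

/-- The conjugate subgroup `g H g⁻¹`. -/
def conjSub (g : G) (H : Subgroup G) : Subgroup G := H.map (MulAut.conj g).toMonoidHom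

/-- The conjugacy class `[H] = {gHg⁻¹ : g ∈ G}` of a subgroup. -/
def conjClass (H : Subgroup G) : Set (Subgroup G) := Set.range fun g : G => conjSub g H

/-- The clips operation `[H₁] ⊚ [H₂] = {[H₁ ∩ gH₂g⁻¹] : g ∈ G}`. -/
def clipsOp (H₁ H₂ : Subgroup G) : Set (Set (Subgroup G)) :=
  Set.range fun g : G => conjClass (H₁ ⊓ conjSub g H₂)

/-- The set of isotropy (symmetry) classes of an action of `G` on `V`. -/
def isotropyClasses (G V : Type*) [Group G] [MulAction G V] : Set (Set (Subgroup G)) :=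
  {C | ∃ v : V, C = conjClass (MulAction.stabilizer G v)}

end ClipsGeneral


section AuxClips

variable {G : Type*} [Group G]

lemma conjSub_one (H : Subgroup G) : conjSub (1 : G) H = H := by
  ext x
  simp [conjSub]

lemma stabilizer_prod {V₁ V₂ : Type*} [MulAction G V₁] [MulAction G V₂] (v₁ : V₁) (v₂ : V₂) :
    MulAction.stabilizer G (v₁, v₂) = MulAction.stabilizer G v₁ ⊓ MulAction.stabilizer G v₂ := by
  ext g
  simp [MulAction.mem_stabilizer_iff, Prod.ext_iff]

end AuxClips

/-- The isotropy classes of the diagonal representation on `V₁ ⊕ V₂`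
are obtained as the union, over the isotropy classes `[H₁]` of `V₁` and `[H₂]` of `V₂`,
of the clips `[H₁] ⊚ [H₂]`. -/
theorem isotropyClasses_prod_eq_clips {G : Type*} [Group G] {k : Type*} [Field k]
    {V₁ V₂ : Type*} [AddCommGroup V₁] [Module k V₁] [AddCommGroup V₂] [Module k V₂]
    [DistribMulAction G V₁] [DistribMulAction G V₂]
    [SMulCommClass G k V₁] [SMulCommClass G k V₂] :
    isotropyClasses G (V₁ × V₂) =
      ⋃ v₁ : V₁, ⋃ v₂ : V₂,
        clipsOp (MulAction.stabilizer G v₁) (MulAction.stabilizer G v₂) := by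
  ext C
  simp only [isotropyClasses, Set.mem_setOf_eq, Set.mem_iUnion, clipsOp, Set.mem_range]
  constructor
  · rintro ⟨⟨v₁, v₂⟩, rfl⟩
    exact ⟨v₁, v₂, 1, by rw [conjSub_one, stabilizer_prod]⟩
  · rintro ⟨v₁, v₂, g, rfl⟩
    refine ⟨(v₁, g • v₂), ?_⟩
    rw [stabilizer_prod, MulAction.stabilizer_smul_eq_stabilizer_map_conj]
    rfl
end

section
/- Let n ≥ 1, m ≥ 2 be integers, d = gcd(m,n), γ = R(e₃, π/n), and let Z_n, Z_m be the cyclic groups of rotations around the z-axis of orders n and m. Then the coset intersection γZ_n ∩ Z_m is nonempty if and only if m/d is even, and in that case γZ_n ∩ Z_m = {R(e₃, (2k+1)π/d) : k ∈ ℤ}. -/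
open Matrix
open scoped Real Pointwise

abbrev O3 := Matrix.orthogonalGroup (Fin 3) ℝ

def SO3 : Subgroup O3 where
  carrier := {A | (A : Matrix (Fin 3) (Fin 3) ℝ).det = 1}
  one_mem' := by simp
  mul_mem' := by
    intro a b ha hb
    simp only [Set.mem_setOf_eq] at *
    rw [Submonoid.coe_mul, Matrix.det_mul, ha, hb, one_mul]
  inv_mem' := by
    intro a ha
    simp only [Set.mem_setOf_eq] at *
    have h : ((a⁻¹ : O3) : Matrix (Fin 3) (Fin 3) ℝ) = star (a : Matrix (Fin 3) (Fin 3) ℝ) := rfl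
    rw [h, Matrix.star_eq_conjTranspose, Matrix.det_conjTranspose]; simpa using ha

def negI : O3 := ⟨-1, by constructor <;> simp⟩

lemma negI_mul_comm (x : O3) : negI * x = x * negI := Subtype.ext <| by
  show (-1 : Matrix (Fin 3) (Fin 3) ℝ) * x = (x : Matrix (Fin 3) (Fin 3) ℝ) * (-1)
  simp

lemma negI_sq : negI * negI = 1 := Subtype.ext <| by
  show (-1 : Matrix (Fin 3) (Fin 3) ℝ) * (-1) = 1
  simp

/-- `-S = {-g : g ∈ S}` -/
def negSet (S : Set O3) : Set O3 := (fun x => negI * x) '' S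

def HZ (H : Subgroup O3) : Subgroup O3 where
  carrier := (H : Set O3) ∪ negSet (H : Set O3)
  one_mem' := Or.inl H.one_mem
  mul_mem' := by
    rintro a b (ha | ⟨a', ha', rfl⟩) (hb | ⟨b', hb', rfl⟩)
    · exact Or.inl (H.mul_mem ha hb)
    · exact Or.inr ⟨a * b', H.mul_mem ha hb', by rw [← mul_assoc, ← negI_mul_comm, mul_assoc]⟩
    · exact Or.inr ⟨a' * b, H.mul_mem ha' hb, by rw [mul_assoc]⟩
    · refine Or.inl ?_
      have h : negI * a' * (negI * b') = a' * b' := by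
        rw [negI_mul_comm a', mul_assoc a', ← mul_assoc negI, negI_sq, one_mul]
      rw [h]; exact H.mul_mem ha' hb'
  inv_mem' := by
    rintro a (ha | ⟨a', ha', rfl⟩)
    · exact Or.inl (H.inv_mem ha)
    · refine Or.inr ⟨a'⁻¹, H.inv_mem ha', ?_⟩
      show negI * a'⁻¹ = (negI * a')⁻¹
      have hinv : negI⁻¹ = negI := by
        rw [eq_comm, eq_inv_iff_mul_eq_one, negI_sq]
      rw [_root_.mul_inv_rev, hinv, ← negI_mul_comm a'⁻¹]

noncomputable def RzM (θ : ℝ) : Matrix (Fin 3) (Fin 3) ℝ :=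
  !![Real.cos θ, -Real.sin θ, 0; Real.sin θ, Real.cos θ, 0; 0, 0, 1]

lemma RzM_mem (θ : ℝ) : RzM θ ∈ Matrix.orthogonalGroup (Fin 3) ℝ := by
  constructor
  · ext i j
    fin_cases i <;> fin_cases j <;>
      simp [RzM, Matrix.mul_apply, Fin.sum_univ_succ, Matrix.one_apply, mul_comm] <;>
      nlinarith [Real.sin_sq_add_cos_sq θ]
  · ext i j
    fin_cases i <;> fin_cases j <;>
      simp [RzM, Matrix.mul_apply, Fin.sum_univ_succ, Matrix.one_apply, mul_comm] <;>
      nlinarith [Real.sin_sq_add_cos_sq θ]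

noncomputable def Rz (θ : ℝ) : O3 := ⟨RzM θ, RzM_mem θ⟩

def e1 : Fin 3 → ℝ := ![1, 0, 0]
def e2 : Fin 3 → ℝ := ![0, 1, 0]
def e3 : Fin 3 → ℝ := ![0, 0, 1]

/-- rotation by `π` about the unit axis `u` (Rodrigues: `2uuᵀ - I`) -/
noncomputable def RpiM (u : Fin 3 → ℝ) : Matrix (Fin 3) (Fin 3) ℝ :=
  (2 : ℝ) • Matrix.vecMulVec u u - 1

lemma RpiM_mem (u : Fin 3 → ℝ) (hu : u ⬝ᵥ u = 1) :
    RpiM u ∈ Matrix.orthogonalGroup (Fin 3) ℝ := by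
  have h3 : u 0 * u 0 + u 1 * u 1 + u 2 * u 2 = 1 := by
    simpa [dotProduct, Fin.sum_univ_three] using hu
  have key : RpiM u * RpiM u = 1 := by
    ext i j
    simp only [RpiM, Matrix.mul_apply, Matrix.sub_apply, Matrix.smul_apply,
      Matrix.vecMulVec_apply, smul_eq_mul, Fin.sum_univ_three]
    fin_cases i <;> fin_cases j <;> simp [Matrix.one_apply] <;>
      first
        | linear_combination (4 * u 0 * u 0) * h3
        | linear_combination (4 * u 1 * u 1) * h3
        | linear_combination (4 * u 2 * u 2) * h3
        | linear_combination (4 * u 0 * u 1) * h3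
        | linear_combination (4 * u 0 * u 2) * h3
        | linear_combination (4 * u 1 * u 2) * h3
  have hsym : star (RpiM u) = RpiM u := by
    rw [Matrix.star_eq_conjTranspose]
    ext i j
    by_cases h : i = j
    · subst h; simp [RpiM, Matrix.conjTranspose_apply, Matrix.vecMulVec_apply]
    · simp [RpiM, Matrix.conjTranspose_apply, Matrix.vecMulVec_apply, Matrix.one_apply, h,
        Ne.symm h]
      ring
  exact ⟨by rw [hsym]; exact key, by rw [hsym]; exact key⟩

noncomputable def Rpi (u : Fin 3 → ℝ) (hu : u ⬝ᵥ u = 1) : O3 := ⟨RpiM u, RpiM_mem u hu⟩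

def conjS (g : O3) (H : Subgroup O3) : Subgroup O3 := H.map (MulAut.conj g).toMonoidHom

def cclass (H : Subgroup O3) : Set (Subgroup O3) := Set.range fun g : O3 => conjS g H

def clips (H K : Subgroup O3) : Set (Set (Subgroup O3)) :=
  Set.range fun g : O3 => cclass (H ⊓ conjS g K)

def conjSet (g : O3) (S : Set O3) : Set O3 := (fun x => g * x * g⁻¹) '' S

lemma e1_unit : e1 ⬝ᵥ e1 = 1 := by norm_num [e1, dotProduct, Fin.sum_univ_three, Matrix.cons_val_two, Matrix.tail_cons, Matrix.head_cons]
lemma e2_unit : e2 ⬝ᵥ e2 = 1 := by norm_num [e2, dotProduct, Fin.sum_univ_three, Matrix.cons_val_two, Matrix.tail_cons, Matrix.head_cons]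
lemma e3_unit : e3 ⬝ᵥ e3 = 1 := by norm_num [e3, dotProduct, Fin.sum_univ_three, Matrix.cons_val_two, Matrix.tail_cons, Matrix.head_cons]


section Aux

lemma Rz_add' (a b : ℝ) : Rz (a + b) = Rz a * Rz b := Subtype.ext <| by
  show RzM (a + b) = RzM a * RzM b
  ext i j
  fin_cases i <;> fin_cases j <;>
    simp [RzM, Matrix.mul_apply, Fin.sum_univ_three, Real.cos_add, Real.sin_add] <;> ring

lemma Rz_zero' : Rz 0 = 1 := Subtype.ext <| by
  show RzM 0 = 1
  ext i j
  fin_cases i <;> fin_cases j <;> simp [RzM, Matrix.one_apply, Matrix.vecHead, Matrix.vecTail]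

lemma Rz_pow' (θ : ℝ) (k : ℕ) : Rz θ ^ k = Rz (k * θ) := by
  induction k with
  | zero => simpa using Rz_zero'.symm
  | succ p ih =>
      rw [pow_succ, ih, ← Rz_add']
      congr 1
      push_cast; ring

lemma Rz_inv' (θ : ℝ) : (Rz θ)⁻¹ = Rz (-θ) := by
  rw [eq_comm, eq_inv_iff_mul_eq_one, ← Rz_add']
  simpa using Rz_zero'

lemma Rz_zpow' (θ : ℝ) (k : ℤ) : Rz θ ^ k = Rz (k * θ) := by
  cases k with
  | ofNat p => simpa using Rz_pow' θ p
  | negSucc p =>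
      rw [zpow_negSucc, Rz_pow', Rz_inv']
      congr 1
      push_cast; ring

lemma Rz_eq_iff' {a b : ℝ} : Rz a = Rz b ↔ ∃ k : ℤ, a = b + 2 * Real.pi * k := by
  constructor
  · intro h
    have h' : RzM a = RzM b := congrArg Subtype.val h
    have hc : Real.cos a = Real.cos b := by
      have := congrFun (congrFun h' 0) 0
      simpa [RzM] using this
    have hs : Real.sin a = Real.sin b := by
      have := congrFun (congrFun h' 1) 0
      simpa [RzM] using this
    have := Real.Angle.cos_sin_inj hc hs
    rw [Real.Angle.angle_eq_iff_two_pi_dvd_sub] at this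
    obtain ⟨k, hk⟩ := this
    exact ⟨k, by linarith⟩
  · rintro ⟨k, rfl⟩
    have h2 : Rz (2 * Real.pi) = 1 := Subtype.ext <| by
      show RzM (2 * Real.pi) = 1
      ext i j
      fin_cases i <;> fin_cases j <;>
        simp [RzM, Matrix.one_apply, Matrix.vecHead, Matrix.vecTail,
          Real.cos_two_pi, Real.sin_two_pi]
    have h3 : Rz (2 * Real.pi * (k : ℝ)) = 1 := by
      have hk : (2 * Real.pi * (k : ℝ)) = ((k : ℤ) : ℝ) * (2 * Real.pi) := by ring
      rw [hk, ← Rz_zpow', h2, _root_.one_zpow]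
    rw [Rz_add', h3, mul_one]

end Aux

/-- With `γ = R(e₃, π/n)` and `d = gcd(m,n)`, the coset intersection
`γZₙ ∩ Zₘ` is nonempty iff `m/d` is even, in which case it equals
`{R(e₃, (2k+1)π/d) : k ∈ ℤ}`. -/
theorem coset_inter_cyclic (n m : ℕ) (hn : 1 ≤ n) (hm : 2 ≤ m) :
    (((fun x => Rz (Real.pi / (n : ℝ)) * x) ''
          (Subgroup.zpowers (Rz (2 * Real.pi / (n : ℝ))) : Set O3) ∩
        (Subgroup.zpowers (Rz (2 * Real.pi / (m : ℝ))) : Set O3)).Nonempty ↔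
      Even (m / Nat.gcd m n)) ∧
    (Even (m / Nat.gcd m n) →
      (fun x => Rz (Real.pi / (n : ℝ)) * x) ''
          (Subgroup.zpowers (Rz (2 * Real.pi / (n : ℝ))) : Set O3) ∩
        (Subgroup.zpowers (Rz (2 * Real.pi / (m : ℝ))) : Set O3) =
        {x : O3 | ∃ k : ℤ, x = Rz ((2 * (k : ℝ) + 1) * Real.pi / (Nat.gcd m n : ℝ))}) := by

  have hπ := Real.pi_ne_zero
  set d := Nat.gcd m n with hd
  have hdm : d ∣ m := Nat.gcd_dvd_left m n
  have hdn : d ∣ n := Nat.gcd_dvd_right m n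
  have hd0 : 0 < d := Nat.gcd_pos_of_pos_left n (by omega)
  set m' := m / d with hm'
  set n' := n / d with hn'
  have hmd : d * m' = m := Nat.mul_div_cancel' hdm
  have hnd : d * n' = n := Nat.mul_div_cancel' hdn
  have hm'0 : 0 < m' := Nat.div_pos (Nat.le_of_dvd (by omega) hdm) hd0
  have hn'0 : 0 < n' := Nat.div_pos (Nat.le_of_dvd (by omega) hdn) hd0
  have hcop : Nat.Coprime m' n' := Nat.coprime_div_gcd_div_gcd hd0
  have hnR : (n : ℝ) ≠ 0 := Nat.cast_ne_zero.mpr (by omega)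
  have hmR : (m : ℝ) ≠ 0 := Nat.cast_ne_zero.mpr (by omega)
  have hdR : (d : ℝ) ≠ 0 := Nat.cast_ne_zero.mpr (by omega)
  have hn'R : (n' : ℝ) ≠ 0 := Nat.cast_ne_zero.mpr (by omega)
  have hcoset : ∀ x : O3, x ∈ (fun y => Rz (Real.pi / (n : ℝ)) * y) ''
      (Subgroup.zpowers (Rz (2 * Real.pi / (n : ℝ))) : Set O3) ↔
      ∃ j : ℤ, x = Rz ((2 * (j : ℝ) + 1) * Real.pi / n) := by
    intro x
    constructor
    · rintro ⟨y, hy, rfl⟩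
      obtain ⟨j, rfl⟩ := Subgroup.mem_zpowers_iff.mp hy
      refine ⟨j, ?_⟩
      beta_reduce
      rw [Rz_zpow', ← Rz_add']
      congr 1
      field_simp
      ring
    · rintro ⟨j, rfl⟩
      refine ⟨Rz (2 * Real.pi / (n : ℝ)) ^ j, Subgroup.zpow_mem_zpowers _ _, ?_⟩
      beta_reduce
      rw [Rz_zpow', ← Rz_add']
      congr 1
      field_simp
      ring
  have hZm : ∀ x : O3, x ∈ (Subgroup.zpowers (Rz (2 * Real.pi / (m : ℝ))) : Set O3) ↔
      ∃ i : ℤ, x = Rz (2 * Real.pi * (i : ℝ) / m) := by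
    intro x
    rw [SetLike.mem_coe, Subgroup.mem_zpowers_iff]
    constructor
    · rintro ⟨i, rfl⟩
      exact ⟨i, by rw [Rz_zpow']; congr 1; ring⟩
    · rintro ⟨i, rfl⟩
      exact ⟨i, by rw [Rz_zpow']; congr 1; ring⟩
  have hext : ∀ j i : ℤ, Rz ((2 * (j : ℝ) + 1) * Real.pi / n) = Rz (2 * Real.pi * (i : ℝ) / m) →
      ∃ l : ℤ, (m' : ℤ) * (2 * j + 1) = 2 * n' * l := by
    intro j i h
    obtain ⟨k, hk⟩ := Rz_eq_iff'.mp h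
    have h2 : (2 * (j : ℝ) + 1) * m = (2 * i + 2 * k * m) * n := by
      apply mul_left_cancel₀ hπ
      field_simp at hk
      linear_combination Real.pi * hk
    have h3 : (2 * j + 1) * (m : ℤ) = (2 * i + 2 * k * m) * n := by exact_mod_cast h2
    have h4 : (2 * j + 1) * ((d : ℤ) * m') = (2 * i + 2 * k * m) * ((d : ℤ) * n') := by
      rw [show ((d : ℤ) * m' = (m : ℤ)) from by exact_mod_cast hmd,
        show ((d : ℤ) * n' = (n : ℤ)) from by exact_mod_cast hnd]
      exact h3
    have hdz : (d : ℤ) ≠ 0 := by exact_mod_cast hd0.ne'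
    refine ⟨i + k * m, ?_⟩
    exact mul_left_cancel₀ hdz
      (show (d : ℤ) * ((m' : ℤ) * (2 * j + 1)) = (d : ℤ) * (2 * n' * (i + k * m)) from by
        linear_combination h4)
  have hoddn' : Even m' → Odd n' := by
    intro he
    rcases Nat.even_or_odd n' with h | h
    · exfalso
      have h1 : Nat.gcd m' n' = 1 := hcop
      have h2 : 2 ∣ Nat.gcd m' n' := Nat.dvd_gcd he.two_dvd h.two_dvd
      omega
    · exact h
  have hbwd : Even m' → ∀ k : ℤ,
      Rz ((2 * (k : ℝ) + 1) * Real.pi / d) ∈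
        (fun x => Rz (Real.pi / (n : ℝ)) * x) ''
            (Subgroup.zpowers (Rz (2 * Real.pi / (n : ℝ))) : Set O3) ∩
          (Subgroup.zpowers (Rz (2 * Real.pi / (m : ℝ))) : Set O3) := by
    intro he k
    obtain ⟨m'', hm''⟩ := he
    have hodd : Odd ((2 * k + 1) * (n' : ℤ)) := by
      refine Odd.mul ⟨k, by ring⟩ ?_
      obtain ⟨t, ht⟩ := hoddn' ⟨m'', hm''⟩
      exact ⟨(t : ℤ), by exact_mod_cast ht⟩
    obtain ⟨j, hj⟩ := hodd
    constructor
    · rw [hcoset]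
      refine ⟨j, ?_⟩
      congr 1
      have hnR' : (n : ℝ) = d * n' := by exact_mod_cast hnd.symm
      have hjR : 2 * (j : ℝ) + 1 = (2 * k + 1) * (n' : ℝ) := by exact_mod_cast hj.symm
      rw [hnR']
      field_simp
      linear_combination (-1 : ℝ) * hjR
    · rw [hZm]
      refine ⟨(2 * k + 1) * m'', ?_⟩
      congr 1
      have hmR' : (m : ℝ) = d * ((m'' : ℝ) + m'') := by
        have : (m : ℝ) = (d : ℝ) * (m' : ℝ) := by exact_mod_cast hmd.symm
        rw [this, hm'']
        push_cast
        ring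
      rw [hmR']
      have hm''0 : (m'' : ℝ) ≠ 0 := by
        have : 0 < m'' := by omega
        exact Nat.cast_ne_zero.mpr this.ne'
      field_simp
      push_cast
      ring
  have hfwd : ∀ x, x ∈ (fun y => Rz (Real.pi / (n : ℝ)) * y) ''
        (Subgroup.zpowers (Rz (2 * Real.pi / (n : ℝ))) : Set O3) ∩
      (Subgroup.zpowers (Rz (2 * Real.pi / (m : ℝ))) : Set O3) →
      ∃ t : ℤ, x = Rz ((2 * (t : ℝ) + 1) * Real.pi / d) := by
    rintro x ⟨hx1, hx2⟩
    obtain ⟨j, rfl⟩ := (hcoset x).mp hx1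
    obtain ⟨i, hi⟩ := (hZm _).mp hx2
    obtain ⟨l, hl⟩ := hext j i hi
    have hcopZ : IsCoprime (n' : ℤ) (m' : ℤ) := by
      rw [Int.isCoprime_iff_gcd_eq_one, Int.gcd_natCast_natCast]
      exact hcop.symm
    have hdvd : (n' : ℤ) ∣ (m' : ℤ) * (2 * j + 1) := ⟨2 * l, by linarith⟩
    have hdvd2 : (n' : ℤ) ∣ (2 * j + 1) := hcopZ.dvd_of_dvd_mul_left hdvd
    obtain ⟨q, hq⟩ := hdvd2
    have hqodd : Odd q := by
      rcases Int.even_or_odd q with h | h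
      · exfalso
        obtain ⟨r, hr⟩ := h
        have heven : Even (2 * j + 1) := ⟨(n' : ℤ) * r, by rw [hq, hr]; ring⟩
        obtain ⟨s, hs⟩ := heven
        omega
      · exact h
    obtain ⟨t, ht⟩ := hqodd
    refine ⟨t, ?_⟩
    congr 1
    have h1 : (2 * (j : ℝ) + 1) = (n' : ℝ) * (2 * (t : ℝ) + 1) := by
      have : (2 * j + 1 : ℤ) = (n' : ℤ) * (2 * t + 1) := by rw [hq, ht]
      exact_mod_cast this
    have h2 : (n : ℝ) = d * n' := by exact_mod_cast hnd.symm
    rw [h2]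
    field_simp
    linear_combination h1
  have hev : (((fun x => Rz (Real.pi / (n : ℝ)) * x) ''
        (Subgroup.zpowers (Rz (2 * Real.pi / (n : ℝ))) : Set O3) ∩
      (Subgroup.zpowers (Rz (2 * Real.pi / (m : ℝ))) : Set O3)).Nonempty) → Even m' := by
    rintro ⟨x, hx1, hx2⟩
    obtain ⟨j, rfl⟩ := (hcoset x).mp hx1
    obtain ⟨i, hi⟩ := (hZm _).mp hx2
    obtain ⟨l, hl⟩ := hext j i hi
    have heven : Even ((m' : ℤ) * (2 * j + 1)) := ⟨(n' : ℤ) * l, by linarith⟩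
    rcases Int.even_mul.mp heven with h | h
    · exact_mod_cast h
    · exfalso
      obtain ⟨r, hr⟩ := h
      omega
  refine ⟨⟨hev, fun h => ⟨_, hbwd h 0⟩⟩, fun h => ?_⟩
  ext x
  simp only [Set.mem_setOf_eq]
  constructor
  · intro hx
    exact hfwd x hx
  · rintro ⟨k, rfl⟩
    exact hbwd h k
end
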